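/- arXiv:2410.11566 — 3 statements merged into one kernel-verified Lean document; each statement's English description precedes it below -/
import Mathlib

section
/- Let F ∈ ℝ^{3×3}. Suppose the prior attitude density with respect to μ is R ↦ etr(FᵀR)/c(F). For i = 1,…,N let r_i, z_i ∈ ℝ³ and σ_i > 0, with likelihood function p_i(R) = (2πσ_i²)^{-3/2}·exp(−‖z_i − Rᵀr_i‖²/(2σ_i²)) (non-unit vector measurement with isotropic Gaussian noise of covariance σ_i²I₃). For i = N+1,…,N+M let r_i, z_i ∈ ℝ³ be unit vectors and κ_i > 0, with likelihood function p_i(R) = (κ_i/(4π·sinh κ_i))·exp(κ_i·r_iᵀRz_i) (von Mises–Fisher distributed unit vector measurement). Then the posterior density π(R) = etr(FᵀR)·∏_{i=1}^{N+M} p_i(R) / ∫_{SO(3)} etr(FᵀQ)·∏_{i=1}^{N+M} p_i(Q) dμ(Q) satisfies, for every R ∈ SO(3), π(R) = etr((F⁺)ᵀR)/c(F⁺), where F⁺ = F + Σ_{i=1}^{N} σ_i^{-2}·r_i z_iᵀ + Σ_{i=N+1}^{N+M} κ_i·r_i z_iᵀ; that is, the posterior attitude distribution is the matrix Fisher distribution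 M(F⁺). -/
open Matrix MeasureTheory

noncomputable section

instance : MeasurableSpace (Matrix (Fin 3) (Fin 3) ℝ) := MeasurableSpace.pi

/-- `SO(3)`: real 3×3 orthogonal matrices with determinant 1. -/
def SO3 : Set (Matrix (Fin 3) (Fin 3) ℝ) := {R | R * Rᵀ = 1 ∧ R.det = 1}

/-- `etr A = exp (tr A)`. -/
def etr (A : Matrix (Fin 3) (Fin 3) ℝ) : ℝ := Real.exp A.trace

/-- Likelihood of a (possibly non-unit) vector measurement `z` of reference vector `r`
with isotropic Gaussian noise of covariance `σ² I₃`. -/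
def gaussLik (σ : ℝ) (r z : Fin 3 → ℝ) (R : Matrix (Fin 3) (Fin 3) ℝ) : ℝ :=
  (2 * Real.pi * σ ^ 2) ^ (-(3 : ℝ) / 2) *
    Real.exp (-(∑ j, (z j - Rᵀ.mulVec r j) ^ 2) / (2 * σ ^ 2))

/-- von Mises–Fisher likelihood of a unit vector measurement `z` of reference vector `r`
with concentration parameter `κ`. -/
def vmfLik (κ : ℝ) (r z : Fin 3 → ℝ) (R : Matrix (Fin 3) (Fin 3) ℝ) : ℝ :=
  κ / (4 * Real.pi * Real.sinh κ) * Real.exp (κ * (r ⬝ᵥ R.mulVec z))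

lemma trace_aux (r z : Fin 3 → ℝ) (R : Matrix (Fin 3) (Fin 3) ℝ) :
    ((vecMulVec r z)ᵀ * R).trace = r ⬝ᵥ R.mulVec z := by
  simp only [Matrix.trace, Matrix.diag, Matrix.mul_apply, Matrix.transpose_apply,
    vecMulVec_apply, dotProduct, Matrix.mulVec, Finset.mul_sum]
  rw [Finset.sum_comm]
  refine Finset.sum_congr rfl fun i _ => Finset.sum_congr rfl fun j _ => by ring

lemma quad_aux (r z : Fin 3 → ℝ) (R : Matrix (Fin 3) (Fin 3) ℝ) (hR : R * Rᵀ = 1) :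
    ∑ j, (z j - Rᵀ.mulVec r j) ^ 2
      = (∑ j, z j ^ 2) + (∑ j, r j ^ 2) - 2 * (r ⬝ᵥ R.mulVec z) := by
  have h1 : ∑ j, (Rᵀ.mulVec r j) ^ 2 = ∑ j, r j ^ 2 := by
    have : (Rᵀ.mulVec r) ⬝ᵥ (Rᵀ.mulVec r) = r ⬝ᵥ r := by
      rw [Matrix.dotProduct_mulVec, Matrix.mulVec_transpose, Matrix.vecMul_vecMul, hR,
        Matrix.vecMul_one]
    simpa [dotProduct, sq] using this
  have h2 : ∑ j, z j * Rᵀ.mulVec r j = r ⬝ᵥ R.mulVec z := by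
    have : z ⬝ᵥ (Rᵀ.mulVec r) = r ⬝ᵥ R.mulVec z := by
      rw [Matrix.dotProduct_mulVec, Matrix.vecMul_transpose, dotProduct_comm]
    simpa [dotProduct] using this
  have expand : ∑ j, (z j - Rᵀ.mulVec r j) ^ 2
      = (∑ j, z j ^ 2) + (∑ j, (Rᵀ.mulVec r j) ^ 2) - 2 * ∑ j, z j * Rᵀ.mulVec r j := by
    rw [Finset.mul_sum, ← Finset.sum_add_distrib, ← Finset.sum_sub_distrib]
    exact Finset.sum_congr rfl fun j _ => by ring
  rw [expand, h1, h2]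

lemma gauss_eq (σ : ℝ) (hσ : 0 < σ) (r z : Fin 3 → ℝ) (R : Matrix (Fin 3) (Fin 3) ℝ)
    (hR : R * Rᵀ = 1) :
    gaussLik σ r z R
      = ((2 * Real.pi * σ ^ 2) ^ (-(3 : ℝ) / 2) *
          Real.exp (-((∑ j, z j ^ 2) + ∑ j, r j ^ 2) / (2 * σ ^ 2))) *
        Real.exp ((σ ^ 2)⁻¹ * (r ⬝ᵥ R.mulVec z)) := by
  unfold gaussLik
  rw [quad_aux r z R hR]
  conv_rhs => rw [mul_assoc, ← Real.exp_add]
  congr 1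
  have hσ2 : σ ^ 2 ≠ 0 := pow_ne_zero _ hσ.ne'
  field_simp
  ring

/-- The posterior attitude distribution obtained from a matrix Fisher prior with parameter `F`,
`N` non-unit vector measurements with isotropic Gaussian noise, and `M` unit vector measurements
with von Mises–Fisher noise, is the matrix Fisher distribution with parameter
`F⁺ = F + ∑ σᵢ⁻² rᵢ zᵢᵀ + ∑ κᵢ rᵢ zᵢᵀ`. -/
theorem posterior_is_matrix_Fisher
    (μ : Measure (Matrix (Fin 3) (Fin 3) ℝ)) [IsProbabilityMeasure μ]
    (hsupp : μ SO3ᶜ = 0)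
    (hleft : ∀ U ∈ SO3, μ.map (fun R => U * R) = μ)
    (hright : ∀ U ∈ SO3, μ.map (fun R => R * U) = μ)
    (F : Matrix (Fin 3) (Fin 3) ℝ)
    (N M : ℕ)
    (r z : Fin N → Fin 3 → ℝ) (σ : Fin N → ℝ) (hσ : ∀ i, 0 < σ i)
    (r' z' : Fin M → Fin 3 → ℝ) (κ : Fin M → ℝ) (hκ : ∀ i, 0 < κ i)
    (hr' : ∀ i, ∑ j, (r' i j) ^ 2 = 1) (hz' : ∀ i, ∑ j, (z' i j) ^ 2 = 1)
    (Fplus : Matrix (Fin 3) (Fin 3) ℝ)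
    (hFplus : Fplus = F + ∑ i, ((σ i) ^ 2)⁻¹ • vecMulVec (r i) (z i)
        + ∑ i, κ i • vecMulVec (r' i) (z' i)) :
    ∀ R ∈ SO3,
      (etr (Fᵀ * R) * ((∏ i, gaussLik (σ i) (r i) (z i) R) *
          ∏ i, vmfLik (κ i) (r' i) (z' i) R)) /
        (∫ Q, etr (Fᵀ * Q) * ((∏ i, gaussLik (σ i) (r i) (z i) Q) *
          ∏ i, vmfLik (κ i) (r' i) (z' i) Q) ∂μ)
      = etr (Fplusᵀ * R) / ∫ Q, etr (Fplusᵀ * Q) ∂μ := by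
  set C : ℝ := (∏ i, (2 * Real.pi * (σ i) ^ 2) ^ (-(3 : ℝ) / 2) *
      Real.exp (-((∑ j, z i j ^ 2) + ∑ j, r i j ^ 2) / (2 * (σ i) ^ 2))) *
    ∏ i, κ i / (4 * Real.pi * Real.sinh (κ i)) with hC
  have hCpos : 0 < C := by
    apply mul_pos
    · exact Finset.prod_pos fun i _ => mul_pos
        (Real.rpow_pos_of_pos (by have := hσ i; positivity) _) (Real.exp_pos _)
    · exact Finset.prod_pos fun i _ => div_pos (hκ i)
        (mul_pos (by positivity) (Real.sinh_pos_iff.2 (hκ i)))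
  have hpoint : ∀ Q ∈ SO3,
      etr (Fᵀ * Q) * ((∏ i, gaussLik (σ i) (r i) (z i) Q) *
          ∏ i, vmfLik (κ i) (r' i) (z' i) Q) = C * etr (Fplusᵀ * Q) := by
    intro Q hQ
    have htr : (Fplusᵀ * Q).trace = (Fᵀ * Q).trace
        + ∑ i, ((σ i) ^ 2)⁻¹ * (r i ⬝ᵥ Q.mulVec (z i))
        + ∑ i, κ i * (r' i ⬝ᵥ Q.mulVec (z' i)) := by
      subst hFplus
      simp only [Matrix.transpose_add, Matrix.add_mul, Matrix.trace_add,
        Matrix.transpose_sum, Finset.sum_mul, Matrix.trace_sum, Matrix.transpose_smul,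
        Matrix.smul_mul, Matrix.trace_smul, smul_eq_mul, trace_aux]
    have hg : ∀ i, gaussLik (σ i) (r i) (z i) Q
        = ((2 * Real.pi * (σ i) ^ 2) ^ (-(3 : ℝ) / 2) *
            Real.exp (-((∑ j, z i j ^ 2) + ∑ j, r i j ^ 2) / (2 * (σ i) ^ 2))) *
          Real.exp (((σ i) ^ 2)⁻¹ * (r i ⬝ᵥ Q.mulVec (z i))) :=
      fun i => gauss_eq (σ i) (hσ i) (r i) (z i) Q hQ.1
    simp only [hg, vmfLik, hC]
    unfold etr
    rw [htr, Real.exp_add, Real.exp_add, Real.exp_sum, Real.exp_sum]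
    simp only [Finset.prod_mul_distrib]
    ring
  have hae : (fun Q => etr (Fᵀ * Q) * ((∏ i, gaussLik (σ i) (r i) (z i) Q) *
      ∏ i, vmfLik (κ i) (r' i) (z' i) Q)) =ᵐ[μ] fun Q => C * etr (Fplusᵀ * Q) := by
    have hSO : ∀ᵐ Q ∂μ, Q ∈ SO3 := by
      rw [MeasureTheory.ae_iff]
      exact hsupp
    filter_upwards [hSO] with Q hQ using hpoint Q hQ
  intro R hR
  rw [integral_congr_ae hae, MeasureTheory.integral_const_mul, hpoint R hR,
    mul_div_mul_left _ _ hCpos.ne']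
end
end

section
/- Let F ∈ ℝ^{3×3}. For i = 1,…,N let r_i, z_i ∈ ℝ³ and σ_i > 0, and for i = N+1,…,N+M let r_i, z_i ∈ ℝ³ and κ_i > 0. Then for every R ∈ SO(3): etr(FᵀR)·∏_{i=1}^{N} exp(−‖z_i − Rᵀr_i‖²/(2σ_i²))·∏_{i=N+1}^{N+M} exp(κ_i·r_iᵀRz_i) = exp(−Σ_{i=1}^{N} (‖z_i‖² + ‖r_i‖²)/(2σ_i²)) · etr((F + Σ_{i=1}^{N} σ_i^{-2}·r_i z_iᵀ + Σ_{i=N+1}^{N+M} κ_i·r_i z_iᵀ)ᵀR). In particular, as a function of R on SO(3), the product of the matrix Fisher prior kernel with the isotropic Gaussian and von Mises–Fisher likelihoods is proportional to a matrix Fisher kernel. -/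
open Matrix MeasureTheory

noncomputable section

lemma aux1 (R : Matrix (Fin 3) (Fin 3) ℝ) (hR : R * Rᵀ = 1) (r : Fin 3 → ℝ) :
    ∑ j, Rᵀ.mulVec r j ^ 2 = ∑ j, r j ^ 2 := by
  have h : Rᵀ.mulVec r ⬝ᵥ Rᵀ.mulVec r = r ⬝ᵥ r := by
    rw [Matrix.dotProduct_mulVec, Matrix.vecMul_transpose, Matrix.mulVec_mulVec, hR,
      Matrix.one_mulVec]
  simpa [dotProduct, sq] using h

lemma aux2 (R : Matrix (Fin 3) (Fin 3) ℝ) (r zv : Fin 3 → ℝ) :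
    ∑ j, zv j * Rᵀ.mulVec r j = r ⬝ᵥ R.mulVec zv := by
  simp [Matrix.mulVec, dotProduct, Finset.mul_sum, Finset.sum_mul]
  rw [Finset.sum_comm]
  congr 1; ext j; congr 1; ext k; ring

lemma aux3 (R : Matrix (Fin 3) (Fin 3) ℝ) (r zv : Fin 3 → ℝ) :
    ((vecMulVec r zv)ᵀ * R).trace = r ⬝ᵥ R.mulVec zv := by
  simp [Matrix.trace, Matrix.diag, Matrix.mul_apply, Matrix.vecMulVec_apply, dotProduct,
    Matrix.mulVec, Finset.mul_sum]
  rw [Finset.sum_comm]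
  congr 1; ext j; congr 1; ext k; ring

/-- On `SO(3)`, the product of the matrix Fisher prior kernel `etr (Fᵀ R)` with the isotropic
Gaussian likelihood kernels of non-unit vector measurements and the von Mises–Fisher likelihood
kernels of unit vector measurements equals a constant (independent of `R`) times the matrix
Fisher kernel with parameter `F + ∑ σᵢ⁻² rᵢ zᵢᵀ + ∑ κᵢ rᵢ zᵢᵀ`. -/
theorem prior_times_likelihood_is_matrix_Fisher_kernel
    (F : Matrix (Fin 3) (Fin 3) ℝ)
    (N M : ℕ)
    (r z : Fin N → Fin 3 → ℝ) (σ : Fin N → ℝ) (hσ : ∀ i, 0 < σ i)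
    (r' z' : Fin M → Fin 3 → ℝ) (κ : Fin M → ℝ) (hκ : ∀ i, 0 < κ i) :
    ∀ R ∈ SO3,
      etr (Fᵀ * R) *
        (∏ i, Real.exp (-(∑ j, (z i j - Rᵀ.mulVec (r i) j) ^ 2) / (2 * σ i ^ 2))) *
        (∏ i, Real.exp (κ i * (r' i ⬝ᵥ R.mulVec (z' i))))
      = Real.exp (-(∑ i, ((∑ j, z i j ^ 2) + ∑ j, r i j ^ 2) / (2 * σ i ^ 2))) *
        etr ((F + ∑ i, ((σ i) ^ 2)⁻¹ • vecMulVec (r i) (z i)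
            + ∑ i, κ i • vecMulVec (r' i) (z' i))ᵀ * R) := by
  intro R hR
  obtain ⟨hRO, -⟩ := hR
  unfold etr
  have htr : ((F + ∑ i, ((σ i) ^ 2)⁻¹ • vecMulVec (r i) (z i)
        + ∑ i, κ i • vecMulVec (r' i) (z' i))ᵀ * R).trace
      = (Fᵀ * R).trace + (∑ i, ((σ i) ^ 2)⁻¹ * (r i ⬝ᵥ R.mulVec (z i)))
        + ∑ i, κ i * (r' i ⬝ᵥ R.mulVec (z' i)) := by
    simp [Matrix.transpose_add, Matrix.add_mul, Matrix.trace_add, Matrix.transpose_sum,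
      Matrix.sum_mul, Matrix.trace_sum, Matrix.transpose_smul, Matrix.smul_mul,
      Matrix.trace_smul, aux3, smul_eq_mul, -Matrix.transpose_vecMulVec]
  have key : ∀ i, -(∑ j, (z i j - Rᵀ.mulVec (r i) j) ^ 2) / (2 * σ i ^ 2)
      = -(((∑ j, z i j ^ 2) + ∑ j, r i j ^ 2) / (2 * σ i ^ 2))
        + ((σ i) ^ 2)⁻¹ * (r i ⬝ᵥ R.mulVec (z i)) := by
    intro i
    have hs : σ i ≠ 0 := (hσ i).ne'
    have e1 := aux1 R hRO (r i)
    have e2 := aux2 R (r i) (z i)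
    have expand : ∑ j, (z i j - Rᵀ.mulVec (r i) j) ^ 2
        = (∑ j, z i j ^ 2) - 2 * (r i ⬝ᵥ R.mulVec (z i)) + ∑ j, r i j ^ 2 := by
      have h : ∀ j, (z i j - Rᵀ.mulVec (r i) j) ^ 2
          = z i j ^ 2 - 2 * (z i j * Rᵀ.mulVec (r i) j) + Rᵀ.mulVec (r i) j ^ 2 :=
        fun j => by ring
      rw [Finset.sum_congr rfl fun j _ => h j, Finset.sum_add_distrib,
        Finset.sum_sub_distrib, ← Finset.mul_sum, e1, e2]
    rw [expand]
    field_simp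
    ring
  rw [← Real.exp_sum, ← Real.exp_sum, ← Real.exp_add, ← Real.exp_add, ← Real.exp_add,
    Real.exp_eq_exp, htr, Finset.sum_congr rfl fun i _ => key i, Finset.sum_add_distrib]
  have hneg : -(∑ i, ((∑ j, z i j ^ 2) + ∑ j, r i j ^ 2) / (2 * σ i ^ 2))
      = ∑ i, -(((∑ j, z i j ^ 2) + ∑ j, r i j ^ 2) / (2 * σ i ^ 2)) := by
    rw [Finset.sum_neg_distrib]
  rw [hneg]
  ring
end
end

section
/- Let U, V ∈ SO(3) and let S = diag(s₁, s₂, s₃) ∈ ℝ^{3×3} with s₁ ≥ s₂ ≥ |s₃| ≥ 0, and set F = U S Vᵀ (a proper singular value decomposition). Then for every R ∈ SO(3), tr(FᵀR) ≤ s₁ + s₂ + s₃, and equality is attained at R = U Vᵀ. Consequently UVᵀ maximizes the matrix Fisher density R ↦ etr(FᵀR)/c(F) over SO(3). -/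
open Matrix MeasureTheory

noncomputable section

lemma so3_row (M : Matrix (Fin 3) (Fin 3) ℝ) (hM : M ∈ SO3) (i j : Fin 3) :
    M i 0 * M j 0 + M i 1 * M j 1 + M i 2 * M j 2 = if i = j then 1 else 0 := by
  have h := congrFun (congrFun hM.1 i) j
  simpa [Matrix.mul_apply, Fin.sum_univ_three, Matrix.one_apply, Matrix.transpose_apply] using h

lemma so3_entry_abs_le (M : Matrix (Fin 3) (Fin 3) ℝ) (hM : M ∈ SO3) (i j : Fin 3) :
    |M i j| ≤ 1 := by
  have h := so3_row M hM i i
  norm_num at h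
  rw [abs_le]
  have h0 := mul_self_nonneg (M i 0)
  have h1 := mul_self_nonneg (M i 1)
  have h2 := mul_self_nonneg (M i 2)
  fin_cases j <;> simp only [Fin.zero_eta, Fin.mk_one, Fin.reduceFinMk] <;> constructor <;>
    nlinarith [mul_self_nonneg (M i 0 - 1), mul_self_nonneg (M i 0 + 1),
      mul_self_nonneg (M i 1 - 1), mul_self_nonneg (M i 1 + 1),
      mul_self_nonneg (M i 2 - 1), mul_self_nonneg (M i 2 + 1)]

lemma so3_mul {A B : Matrix (Fin 3) (Fin 3) ℝ} (hA : A ∈ SO3) (hB : B ∈ SO3) :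
    A * B ∈ SO3 := by
  constructor
  · rw [Matrix.transpose_mul]
    calc A * B * (Bᵀ * Aᵀ) = A * (B * Bᵀ) * Aᵀ := by simp only [mul_assoc]
      _ = 1 := by rw [hB.1, mul_one, hA.1]
  · rw [Matrix.det_mul, hA.2, hB.2, mul_one]

lemma so3_transpose {A : Matrix (Fin 3) (Fin 3) ℝ} (hA : A ∈ SO3) : Aᵀ ∈ SO3 := by
  refine ⟨?_, by rw [Matrix.det_transpose]; exact hA.2⟩
  rw [Matrix.transpose_transpose]
  exact mul_eq_one_comm.mp hA.1

lemma so3_adj (M : Matrix (Fin 3) (Fin 3) ℝ) (hM : M ∈ SO3) : Mᵀ = adjugate M := by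
  have hMl : Mᵀ * M = 1 := mul_eq_one_comm.mp hM.1
  calc Mᵀ = Mᵀ * (M * adjugate M) := by rw [Matrix.mul_adjugate, hM.2, one_smul, mul_one]
    _ = (Mᵀ * M) * adjugate M := by rw [mul_assoc]
    _ = adjugate M := by rw [hMl, one_mul]

lemma so3_trace_ge (M : Matrix (Fin 3) (Fin 3) ℝ) (hM : M ∈ SO3) :
    -1 ≤ M 0 0 + M 1 1 + M 2 2 := by
  have hadj := so3_adj M hM
  have e0 : M 0 0 = M 1 1 * M 2 2 - M 1 2 * M 2 1 := by
    have := congrFun (congrFun hadj 0) 0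
    simpa [adjugate_fin_three] using this
  have e1 : M 1 1 = M 0 0 * M 2 2 - M 0 2 * M 2 0 := by
    have := congrFun (congrFun hadj 1) 1
    simpa [adjugate_fin_three] using this
  have e2 : M 2 2 = M 0 0 * M 1 1 - M 0 1 * M 1 0 := by
    have := congrFun (congrFun hadj 2) 2
    simpa [adjugate_fin_three] using this
  have r0 := so3_row M hM 0 0
  have r1 := so3_row M hM 1 1
  have r2 := so3_row M hM 2 2
  norm_num at r0 r1 r2
  have hd0 := (abs_le.mp (so3_entry_abs_le M hM 0 0)).2
  have hd1 := (abs_le.mp (so3_entry_abs_le M hM 1 1)).2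
  have hd2 := (abs_le.mp (so3_entry_abs_le M hM 2 2)).2
  have hs : (M 2 1 - M 1 2)^2 + (M 0 2 - M 2 0)^2 + (M 1 0 - M 0 1)^2
      = (1 + (M 0 0 + M 1 1 + M 2 2)) * (3 - (M 0 0 + M 1 1 + M 2 2)) := by
    linear_combination r0 + r1 + r2 - 2*e0 - 2*e1 - 2*e2
  by_contra hc
  push_neg at hc
  have h1 : (1 + (M 0 0 + M 1 1 + M 2 2)) * (3 - (M 0 0 + M 1 1 + M 2 2)) < 0 :=
    mul_neg_of_neg_of_pos (by linarith) (by linarith)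
  linarith [sq_nonneg (M 2 1 - M 1 2), sq_nonneg (M 0 2 - M 2 0), sq_nonneg (M 1 0 - M 0 1), hs, h1]

lemma so3_flip (Q : Matrix (Fin 3) (Fin 3) ℝ) (hQ : Q ∈ SO3) :
    Q 0 0 + Q 1 1 - Q 2 2 ≤ 1 := by
  set D : Matrix (Fin 3) (Fin 3) ℝ := diagonal ![1, 1, -1] with hD
  have hDmem : -D ∈ SO3 := by
    constructor
    · rw [Matrix.transpose_neg, Matrix.neg_mul, Matrix.mul_neg, neg_neg, hD,
        Matrix.diagonal_transpose, Matrix.diagonal_mul_diagonal]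
      ext i j
      fin_cases i <;> fin_cases j <;> simp [Matrix.one_apply]
    · rw [Matrix.det_neg, hD, Matrix.det_diagonal]
      norm_num [Fin.prod_univ_three, Matrix.cons_val_two, Matrix.tail_cons, Matrix.head_cons]
  have hN : (-D) * Q ∈ SO3 := so3_mul hDmem hQ
  have htr := so3_trace_ge _ hN
  have e0 : ((-D) * Q) 0 0 = -Q 0 0 := by norm_num [hD, Matrix.neg_mul, Matrix.diagonal_mul]
  have e1 : ((-D) * Q) 1 1 = -Q 1 1 := by norm_num [hD, Matrix.neg_mul, Matrix.diagonal_mul]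
  have e2 : ((-D) * Q) 2 2 = Q 2 2 := by norm_num [hD, Matrix.neg_mul, Matrix.diagonal_mul, Matrix.cons_val_two, Matrix.tail_cons, Matrix.head_cons]
  rw [e0, e1, e2] at htr
  linarith

lemma so3_trace_diag_le (s : Fin 3 → ℝ) (h12 : s 1 ≤ s 0) (h23 : |s 2| ≤ s 1)
    (Q : Matrix (Fin 3) (Fin 3) ℝ) (hQ : Q ∈ SO3) :
    s 0 * Q 0 0 + s 1 * Q 1 1 + s 2 * Q 2 2 ≤ s 0 + s 1 + s 2 := by
  have habs := abs_le.mp h23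
  have hs1 : 0 ≤ s 1 := le_trans (abs_nonneg _) h23
  have hq0 := (abs_le.mp (so3_entry_abs_le Q hQ 0 0)).2
  have hq2 := (abs_le.mp (so3_entry_abs_le Q hQ 2 2)).2
  have hflip := so3_flip Q hQ
  have t1 : 0 ≤ (s 0 - s 1) * (1 - Q 0 0) := mul_nonneg (by linarith) (by linarith)
  have t2 : 0 ≤ s 1 * (1 - (Q 0 0 + Q 1 1 - Q 2 2)) := mul_nonneg hs1 (by linarith)
  have t3 : 0 ≤ (s 1 + s 2) * (1 - Q 2 2) := mul_nonneg (by linarith) (by linarith)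
  nlinarith [t1, t2, t3]

/-- If `F = U S Vᵀ` is a proper singular value decomposition (`U, V ∈ SO(3)`,
`S = diag(s₁,s₂,s₃)` with `s₁ ≥ s₂ ≥ |s₃| ≥ 0`), then `tr(Fᵀ R) ≤ s₁ + s₂ + s₃` for all
`R ∈ SO(3)`, with equality at `R = U Vᵀ`; consequently `U Vᵀ` maximizes the matrix Fisher
density `R ↦ etr(Fᵀ R)/c(F)` over `SO(3)`. -/
theorem mean_attitude_maximizes_matrix_Fisher_density
    (μ : Measure (Matrix (Fin 3) (Fin 3) ℝ)) [IsProbabilityMeasure μ]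
    (hsupp : μ SO3ᶜ = 0)
    (hleft : ∀ W ∈ SO3, μ.map (fun R => W * R) = μ)
    (hright : ∀ W ∈ SO3, μ.map (fun R => R * W) = μ)
    (U V : Matrix (Fin 3) (Fin 3) ℝ) (hU : U ∈ SO3) (hV : V ∈ SO3)
    (s : Fin 3 → ℝ) (h12 : s 1 ≤ s 0) (h23 : |s 2| ≤ s 1)
    (F : Matrix (Fin 3) (Fin 3) ℝ) (hF : F = U * diagonal s * Vᵀ) :
    (∀ R ∈ SO3, (Fᵀ * R).trace ≤ s 0 + s 1 + s 2) ∧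
    (Fᵀ * (U * Vᵀ)).trace = s 0 + s 1 + s 2 ∧
    (∀ R ∈ SO3, etr (Fᵀ * R) / (∫ Q, etr (Fᵀ * Q) ∂μ)
        ≤ etr (Fᵀ * (U * Vᵀ)) / ∫ Q, etr (Fᵀ * Q) ∂μ) := by
  have hUo : Uᵀ * U = 1 := mul_eq_one_comm.mp hU.1
  have hVo : Vᵀ * V = 1 := mul_eq_one_comm.mp hV.1
  have hFT : Fᵀ = V * diagonal s * Uᵀ := by
    rw [hF, Matrix.transpose_mul, Matrix.transpose_mul, Matrix.transpose_transpose,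
      Matrix.diagonal_transpose, mul_assoc]
  -- trace formula
  have htrace : ∀ R : Matrix (Fin 3) (Fin 3) ℝ,
      (Fᵀ * R).trace = s 0 * (Uᵀ * R * V) 0 0 + s 1 * (Uᵀ * R * V) 1 1
        + s 2 * (Uᵀ * R * V) 2 2 := by
    intro R
    have h1 : Fᵀ * R = V * (diagonal s * (Uᵀ * R)) := by
      rw [hFT, mul_assoc, mul_assoc]
    rw [h1, Matrix.trace_mul_comm]
    rw [mul_assoc, Matrix.trace_fin_three]
    simp [Matrix.diagonal_mul]
  -- the upper bound
  have hmain : ∀ R ∈ SO3, (Fᵀ * R).trace ≤ s 0 + s 1 + s 2 := by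
    intro R hR
    rw [htrace R]
    exact so3_trace_diag_le s h12 h23 _ (so3_mul (so3_mul (so3_transpose hU) hR) hV)
  -- equality at U Vᵀ
  have heq : (Fᵀ * (U * Vᵀ)).trace = s 0 + s 1 + s 2 := by
    rw [htrace]
    have hQ : Uᵀ * (U * Vᵀ) * V = 1 := by
      rw [← mul_assoc, hUo, one_mul, hVo]
    rw [hQ]
    norm_num [Matrix.one_apply]
  refine ⟨hmain, heq, ?_⟩
  -- positivity of the normalizing constant
  set C : ℝ := ∑ i : Fin 3, ∑ j : Fin 3, |F j i| with hC
  have htr_sum : ∀ Q : Matrix (Fin 3) (Fin 3) ℝ,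
      (Fᵀ * Q).trace = ∑ i : Fin 3, ∑ j : Fin 3, F j i * Q j i := by
    intro Q
    simp [Matrix.trace, Matrix.diag, Matrix.mul_apply, Matrix.transpose_apply]
  have habs : ∀ Q ∈ SO3, |(Fᵀ * Q).trace| ≤ C := by
    intro Q hQ
    rw [htr_sum Q]
    calc |∑ i : Fin 3, ∑ j : Fin 3, F j i * Q j i|
        ≤ ∑ i : Fin 3, |∑ j : Fin 3, F j i * Q j i| := Finset.abs_sum_le_sum_abs _ _
      _ ≤ ∑ i : Fin 3, ∑ j : Fin 3, |F j i * Q j i| :=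
          Finset.sum_le_sum fun i _ => Finset.abs_sum_le_sum_abs _ _
      _ ≤ C := Finset.sum_le_sum fun i _ => Finset.sum_le_sum fun j _ => by
          rw [abs_mul]
          exact mul_le_of_le_one_right (abs_nonneg _) (so3_entry_abs_le Q hQ j i)
  have hmeas : Measurable fun Q : Matrix (Fin 3) (Fin 3) ℝ => etr (Fᵀ * Q) := by
    have h1 : (fun Q : Matrix (Fin 3) (Fin 3) ℝ => etr (Fᵀ * Q))
        = fun Q => Real.exp (∑ i : Fin 3, ∑ j : Fin 3, F j i * Q j i) := by
      funext Q
      rw [etr, htr_sum Q]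
    rw [h1]
    refine Real.measurable_exp.comp ?_
    refine Finset.measurable_sum _ fun i _ => Finset.measurable_sum _ fun j _ => ?_
    have hji : Measurable fun Q : Matrix (Fin 3) (Fin 3) ℝ => Q j i := by
      have h2 : Measurable fun Q : Matrix (Fin 3) (Fin 3) ℝ => Q j := measurable_pi_apply j
      exact (measurable_pi_apply i).comp h2
    exact hji.const_mul (F j i)
  have hae : ∀ᵐ Q ∂μ, Q ∈ SO3 := by
    rw [MeasureTheory.ae_iff]
    exact hsupp
  have hbound : ∀ᵐ Q ∂μ, ‖etr (Fᵀ * Q)‖ ≤ Real.exp C := by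
    filter_upwards [hae] with Q hQ
    rw [etr, Real.norm_eq_abs, abs_of_pos (Real.exp_pos _)]
    exact Real.exp_le_exp.mpr (le_trans (le_abs_self _) (habs Q hQ))
  have hint : Integrable (fun Q => etr (Fᵀ * Q)) μ :=
    Integrable.mono' (integrable_const (Real.exp C)) hmeas.aestronglyMeasurable hbound
  have hlow : ∀ᵐ Q ∂μ, Real.exp (-C) ≤ etr (Fᵀ * Q) := by
    filter_upwards [hae] with Q hQ
    rw [etr]
    exact Real.exp_le_exp.mpr (neg_le_of_abs_le (habs Q hQ))
  have hpos : 0 < ∫ Q, etr (Fᵀ * Q) ∂μ := by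
    have h1 : ∫ _ : Matrix (Fin 3) (Fin 3) ℝ, Real.exp (-C) ∂μ ≤ ∫ Q, etr (Fᵀ * Q) ∂μ :=
      integral_mono_ae (integrable_const _) hint hlow
    rw [integral_const, probReal_univ, one_smul] at h1
    exact lt_of_lt_of_le (Real.exp_pos _) h1
  intro R hR
  have hnum : etr (Fᵀ * R) ≤ etr (Fᵀ * (U * Vᵀ)) := by
    rw [etr, etr, heq]
    exact Real.exp_le_exp.mpr (hmain R hR)
  exact div_le_div_of_nonneg_right hnum hpos.le
end
end
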